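/- arXiv:math/0410461 — 4 statements merged into one kernel-verified Lean document; each statement's English description precedes it below -/
import Mathlib

section
/- Let n, M be positive natural numbers and let f : ℝ^n × ℝ^M → ℝ be a smooth (infinitely differentiable) function satisfying f(c • y, z) = c · f(y, z) for every real number c > 0, every y ∈ ℝ^n and every z ∈ ℝ^M. Then there exist smooth functions F_1, …, F_n : ℝ^M → ℝ such that f(y, z) = Σ_{p=1}^{n} F_p(z) · y_p for all y ∈ ℝ^n and z ∈ ℝ^M. -/
/-- Homogeneous function theorem, degree-1-in-the-first-variable case:
a smooth `f : ℝ^n × ℝ^M → ℝ` with `f (c • y, z) = c * f (y, z)` for all `c > 0`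
is linear in `y` with smooth coefficient functions of `z`. -/
theorem stmt_2 (n M : ℕ) (hn : 0 < n) (hM : 0 < M)
    (f : (Fin n → ℝ) × (Fin M → ℝ) → ℝ) (hf : ContDiff ℝ (⊤ : ℕ∞) f)
    (hhom : ∀ c : ℝ, 0 < c → ∀ (y : Fin n → ℝ) (z : Fin M → ℝ),
      f (c • y, z) = c * f (y, z)) :
    ∃ F : Fin n → ((Fin M → ℝ) → ℝ),
      (∀ p : Fin n, ContDiff ℝ (⊤ : ℕ∞) (F p)) ∧
      ∀ (y : Fin n → ℝ) (z : Fin M → ℝ), f (y, z) = ∑ p : Fin n, F p z * y p := by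
  classical
  have f0 : ∀ z, f (0, z) = 0 := by
    intro z
    have h := hhom 2 (by norm_num) 0 z
    simp only [smul_zero] at h
    linarith
  refine ⟨fun p z => fderiv ℝ f (0, z) (Pi.single p 1, 0), ?_, ?_⟩
  · intro p
    have hfd : ContDiff ℝ (⊤ : ℕ∞) (fderiv ℝ f) := hf.fderiv_right (by simp)
    have h1 : ContDiff ℝ (⊤ : ℕ∞) (fun z : Fin M → ℝ => fderiv ℝ f (0, z)) :=
      hfd.comp (contDiff_const.prodMk contDiff_id)
    exact (ContinuousLinearMap.apply ℝ ℝ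
      ((Pi.single p 1, 0) : (Fin n → ℝ) × (Fin M → ℝ))).contDiff.comp h1
  · intro y z
    have key : f (y, z) = fderiv ℝ f (0, z) (y, 0) := by
      have hdiff : HasFDerivAt f (fderiv ℝ f (0, z)) (0, z) :=
        (hf.differentiable (by simp) (0, z)).hasFDerivAt
      have hinner : HasDerivAt
          (fun t : ℝ => ((t • y, z) : (Fin n → ℝ) × (Fin M → ℝ)))
          ((y, 0) : (Fin n → ℝ) × (Fin M → ℝ)) 0 := by
        have h1 : HasDerivAt (fun t : ℝ => t • y) y 0 := by
          simpa using (hasDerivAt_id (0 : ℝ)).smul_const y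
        exact h1.prodMk (hasDerivAt_const 0 z)
      have hg : HasDerivAt (fun t : ℝ => f (t • y, z))
          (fderiv ℝ f (0, z) (y, 0)) 0 := by
        have hdiff' : HasFDerivAt f (fderiv ℝ f (0, z)) ((0 : ℝ) • y, z) := by
          simpa using hdiff
        exact hdiff'.comp_hasDerivAt 0 hinner
      have hg1 : HasDerivWithinAt (fun t : ℝ => f (t • y, z))
          (fderiv ℝ f (0, z) (y, 0)) (Set.Ici 0) 0 := hg.hasDerivWithinAt
      have hg2 : HasDerivWithinAt (fun t : ℝ => f (t • y, z))
          (f (y, z)) (Set.Ici 0) 0 := by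
        have hlin : HasDerivWithinAt (fun t : ℝ => t * f (y, z))
            (f (y, z)) (Set.Ici 0) 0 := by
          simpa using ((hasDerivAt_id (0 : ℝ)).mul_const (f (y, z))).hasDerivWithinAt
        refine hlin.congr ?_ ?_
        · intro t ht
          rcases eq_or_lt_of_le (Set.mem_Ici.mp ht) with h | h
          · simp [← h, f0]
          · rw [hhom t h y z]
        · simp [f0]
      have hU : UniqueDiffWithinAt ℝ (Set.Ici (0 : ℝ)) 0 := uniqueDiffOn_Ici 0 0 Set.self_mem_Ici
      exact (hg2.derivWithin hU).symm.trans (hg1.derivWithin hU)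
    rw [key]
    have hy : ((y, 0) : (Fin n → ℝ) × (Fin M → ℝ)) =
        ∑ p : Fin n, y p • ((Pi.single p 1, 0) : (Fin n → ℝ) × (Fin M → ℝ)) := by
      have hsum : (∑ p : Fin n, y p • ((Pi.single p 1, 0) : (Fin n → ℝ) × (Fin M → ℝ)))
          = (∑ p : Fin n, y p • (Pi.single p 1 : Fin n → ℝ),
             ∑ p : Fin n, y p • (0 : Fin M → ℝ)) := by
        rw [Prod.ext_iff]
        constructor
        · rw [Prod.fst_sum]; simp
        · rw [Prod.snd_sum]; simp
      rw [hsum]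
      refine Prod.ext ?_ (by simp)
      simp only
      ext x
      rw [Finset.sum_apply]
      simp [Pi.single_apply, Finset.sum_ite_eq]
    rw [hy, map_sum]
    refine Finset.sum_congr rfl fun p _ => ?_
    rw [map_smul]
    simp [mul_comm]
end

section
/- Let m be a positive natural number, let w : Fin m → ℕ be a weight function with w(i) ≥ 1 for every i, and let f : (Fin m → ℝ) → ℝ be a smooth function satisfying f(fun i => c^(w i) · x i) = c · f(x) for every real number c > 0 and every x : Fin m → ℝ. Then there exist real constants λ_i, indexed by those i with w(i) = 1, such that f(x) = Σ_{i : w(i) = 1} λ_i · x_i for all x. -/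
/-- Homogeneous function theorem, weighted degree 1: a smooth function that is
weighted positively homogeneous of degree 1 with positive integer weights `w`
is a linear combination of the weight-1 variables. -/
theorem stmt_3 (m : ℕ) (hm : 0 < m) (w : Fin m → ℕ) (hw : ∀ i, 1 ≤ w i)
    (f : (Fin m → ℝ) → ℝ) (hf : ContDiff ℝ (⊤ : ℕ∞) f)
    (hhom : ∀ c : ℝ, 0 < c → ∀ x : Fin m → ℝ,
      f (fun i => c ^ (w i) * x i) = c * f x) :
    ∃ lam : Fin m → ℝ, ∀ x : Fin m → ℝ,
      f x = ∑ i ∈ Finset.univ.filter (fun i => w i = 1), lam i * x i := by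
  have hdf : Differentiable ℝ f := hf.differentiable (by simp)
  set L := fderiv ℝ f 0 with hL
  refine ⟨fun i => L (Pi.single i 1), fun x => ?_⟩
  set v : Fin m → ℝ := fun i => if w i = 1 then x i else 0 with hv
  have hγ0 : (fun i => (0:ℝ) ^ (w i) * x i) = (0 : Fin m → ℝ) := by
    funext i
    have : w i ≠ 0 := by have := hw i; omega
    simp [zero_pow this]
  -- f 0 = 0
  have hf0 : f 0 = 0 := by
    have := hhom 2 (by norm_num) 0
    have h2 : (fun i => (2:ℝ)^(w i) * (0 : Fin m → ℝ) i) = 0 := by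
      funext i; simp
    rw [h2] at this; linarith
  -- derivative of the path
  have hγ : HasDerivAt (fun c : ℝ => (fun i => c ^ (w i) * x i)) v 0 := by
    rw [hasDerivAt_pi]
    intro i
    have h := (hasDerivAt_pow (w i) (0:ℝ)).mul_const (x i)
    refine h.congr_deriv ?_
    show _ = (if w i = 1 then x i else 0)
    rcases eq_or_lt_of_le (hw i) with h1 | h1
    · simp [hv, ← h1]
    · have hz : (0:ℝ) ^ (w i - 1) = 0 := zero_pow (by omega)
      have : w i ≠ 1 := by omega
      simp [hv, hz, this]
  have hF : HasFDerivAt f L ((fun i => (0:ℝ) ^ (w i) * x i)) := by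
    rw [hγ0]; exact (hdf 0).hasFDerivAt
  have hcomp : HasDerivAt (fun c : ℝ => f (fun i => c ^ (w i) * x i)) (L v) 0 :=
    hF.comp_hasDerivAt 0 hγ
  -- compare slopes along 𝓝[>] 0
  have hslope : Filter.Tendsto (slope (fun c : ℝ => f (fun i => c ^ (w i) * x i)) 0)
      (nhdsWithin 0 (Set.Ioi 0)) (nhds (L v)) := by
    have := hasDerivAt_iff_tendsto_slope.mp hcomp
    exact this.mono_left (nhdsWithin_mono _ (fun c hc => ne_of_gt hc))
  have heq : ∀ᶠ c in nhdsWithin (0:ℝ) (Set.Ioi 0),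
      slope (fun c : ℝ => f (fun i => c ^ (w i) * x i)) 0 c = f x := by
    filter_upwards [self_mem_nhdsWithin] with c hc
    have hc' : (0:ℝ) < c := hc
    rw [slope_def_field]
    simp only [hγ0, hf0, hhom c hc' x]
    rw [sub_zero, sub_zero]
    field_simp
  have hfx : Filter.Tendsto (slope (fun c : ℝ => f (fun i => c ^ (w i) * x i)) 0)
      (nhdsWithin 0 (Set.Ioi 0)) (nhds (f x)) :=
    Filter.Tendsto.congr' (Filter.EventuallyEq.symm heq) tendsto_const_nhds
  have hmain : f x = L v := tendsto_nhds_unique hfx hslope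
  -- expand L v as a sum
  have hvsum : v = ∑ i ∈ Finset.univ.filter (fun i => w i = 1),
      x i • (Pi.single i 1 : Fin m → ℝ) := by
    funext j
    simp only [Finset.sum_apply, Pi.smul_apply, Pi.single_apply, smul_eq_mul,
      mul_ite, mul_one, mul_zero]
    rw [Finset.sum_ite_eq]
    by_cases hj : w j = 1 <;> simp [hv, hj]
  rw [hmain, hvsum, map_sum]
  refine Finset.sum_congr rfl fun i _ => ?_
  rw [map_smul]
  simp [mul_comm]
end

section
/- Let m be a positive natural number, let w : Fin m → ℕ be a weight function with w(i) ≥ 1 for every i, and let f : (Fin m → ℝ) → ℝ be a smooth function satisfying f(fun i => c^(w i) · x i) = c² · f(x) for every real number c > 0 and every x : Fin m → ℝ. Then there exist real constants a_{ij}, indexed by pairs i, j with w(i) = w(j) = 1, and real constants b_i, indexed by those i with w(i) = 2, such that f(x) = Σ_{i,j : w(i)=w(j)=1} a_{ij} · x_i · x_j + Σ_{i : w(i)=2} b_i · x_i for all x. -/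
open scoped ContDiff

namespace Stmt4Aux

variable {m : ℕ}

/-- canonical basis vector -/
noncomputable def e (i : Fin m) : Fin m → ℝ := fun j => if i = j then (1 : ℝ) else 0

lemma clm_expand (T : (Fin m → ℝ) →L[ℝ] ℝ) (v : Fin m → ℝ) :
    T v = ∑ i, v i * T (e i) := by
  conv_lhs => rw [pi_eq_sum_univ v]
  rw [map_sum]
  simp only [map_smul, smul_eq_mul]
  rfl

lemma clm_expand2 (B : (Fin m → ℝ) →L[ℝ] ((Fin m → ℝ) →L[ℝ] ℝ)) (v v' : Fin m → ℝ) :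
    B v v' = ∑ i, v i * B (e i) v' := by
  conv_lhs => rw [pi_eq_sum_univ v]
  rw [map_sum, ContinuousLinearMap.sum_apply]
  simp only [map_smul, ContinuousLinearMap.smul_apply, smul_eq_mul]
  rfl

end Stmt4Aux

/-- Homogeneous function theorem, weighted degree 2: a smooth function that is
weighted positively homogeneous of degree 2 with positive integer weights `w`
is quadratic in the weight-1 variables and linear in the weight-2 variables. -/
theorem stmt_4 (m : ℕ) (hm : 0 < m) (w : Fin m → ℕ) (hw : ∀ i, 1 ≤ w i)
    (f : (Fin m → ℝ) → ℝ) (hf : ContDiff ℝ (⊤ : ℕ∞) f)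
    (hhom : ∀ c : ℝ, 0 < c → ∀ x : Fin m → ℝ,
      f (fun i => c ^ (w i) * x i) = c ^ 2 * f x) :
    ∃ (a : Fin m → Fin m → ℝ) (b : Fin m → ℝ), ∀ x : Fin m → ℝ,
      f x =
        (∑ i ∈ Finset.univ.filter (fun i => w i = 1),
          ∑ j ∈ Finset.univ.filter (fun j => w j = 1), a i j * x i * x j)
        + ∑ i ∈ Finset.univ.filter (fun i => w i = 2), b i * x i := by
  open Stmt4Aux in
  set F : (Fin m → ℝ) → ((Fin m → ℝ) →L[ℝ] ℝ) := fderiv ℝ f with hFdef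
  have hdf : Differentiable ℝ f := hf.differentiable (by simp)
  have hFcd : ContDiff ℝ 1 F := hf.fderiv_right (by norm_cast)
  have hFdiff : Differentiable ℝ F := hFcd.differentiable one_ne_zero
  set F' : (Fin m → ℝ) →L[ℝ] ((Fin m → ℝ) →L[ℝ] ℝ) := fderiv ℝ F 0 with hF'def
  refine ⟨fun i j => F' (Stmt4Aux.e i) (Stmt4Aux.e j) / 2,
    fun i => F 0 (Stmt4Aux.e i), fun x => ?_⟩
  -- the scaling curve
  set φ : ℝ → (Fin m → ℝ) := fun c i => c ^ (w i) * x i with hφdef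
  set φ₁ : ℝ → (Fin m → ℝ) :=
    fun c i => (w i : ℝ) * c ^ (w i - 1) * x i with hφ₁def
  set φ₂ : ℝ → (Fin m → ℝ) :=
    fun c i => (w i : ℝ) * (((w i - 1 : ℕ) : ℝ) * c ^ (w i - 1 - 1)) * x i with hφ₂def
  have hφ : ∀ c, HasDerivAt φ (φ₁ c) c := by
    intro c
    rw [hasDerivAt_pi]
    intro i
    exact (hasDerivAt_pow (w i) c).mul_const (x i)
  have hφ₁ : ∀ c, HasDerivAt φ₁ (φ₂ c) c := by
    intro c
    rw [hasDerivAt_pi]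
    intro i
    exact (((hasDerivAt_pow (w i - 1) c).const_mul ((w i : ℕ) : ℝ)).mul_const (x i))
  have hφ0 : φ 0 = 0 := by
    funext i
    have : (0 : ℝ) ^ (w i) = 0 := zero_pow (by have := hw i; omega)
    simp [hφdef, this]
  -- values of the derivatives at 0
  have hu : φ₁ 0 = fun i => if w i = 1 then x i else 0 := by
    funext i
    by_cases h : w i = 1
    · simp [hφ₁def, h]
    · have h1 : w i - 1 ≠ 0 := by have := hw i; omega
      simp [hφ₁def, h, zero_pow h1]
  have hv : φ₂ 0 = fun i => if w i = 2 then 2 * x i else 0 := by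
    funext i
    by_cases h : w i = 2
    · norm_num [hφ₂def, h]
    · rcases eq_or_ne (w i) 1 with h1 | h1
      · simp [hφ₂def, h, h1]
      · have h2 : w i - 1 - 1 ≠ 0 := by have := hw i; omega
        simp [hφ₂def, h, zero_pow h2]
  -- g and its derivatives
  set g : ℝ → ℝ := fun c => f (φ c) with hgdef
  have hg' : ∀ c, HasDerivAt g (F (φ c) (φ₁ c)) c := fun c =>
    ((hdf (φ c)).hasFDerivAt).comp_hasDerivAt c (hφ c)
  have hderivg : deriv g = fun c => F (φ c) (φ₁ c) := funext fun c => (hg' c).deriv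
  have hG : HasDerivAt (fun c => F (φ c) (φ₁ c))
      (F' (φ₁ 0) (φ₁ 0) + F 0 (φ₂ 0)) 0 := by
    have hc : HasDerivAt (fun c => F (φ c)) (F' (φ₁ 0)) 0 := by
      have hF0 : HasFDerivAt F F' (φ 0) := by
        rw [hφ0]; exact (hFdiff 0).hasFDerivAt
      exact hF0.comp_hasDerivAt 0 (hφ 0)
    have := hc.clm_apply (hφ₁ 0)
    rwa [hφ0] at this
  have hdd0 : deriv (deriv g) 0 = F' (φ₁ 0) (φ₁ 0) + F 0 (φ₂ 0) := by
    rw [hderivg]; exact hG.deriv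
  -- smoothness of g
  have hφcd : ContDiff ℝ (⊤ : ℕ∞) φ := by
    rw [contDiff_pi]
    exact fun i => (contDiff_id.pow (w i)).mul contDiff_const
  have hgcd : ContDiff ℝ ∞ g := (hf.comp hφcd).of_le (by simp)
  have h1 : ContDiff ℝ ∞ (deriv g) := (contDiff_infty_iff_deriv.mp hgcd).2
  have h2 : ContDiff ℝ ∞ (deriv (deriv g)) := (contDiff_infty_iff_deriv.mp h1).2
  have hcont : Continuous (deriv (deriv g)) := h2.continuous
  -- on (0, ∞), deriv g c = 2 c f x
  have hdg : ∀ c ∈ Set.Ioi (0 : ℝ), deriv g c = 2 * c * f x := by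
    intro c hc
    have hev : g =ᶠ[nhds c] fun t => t ^ 2 * f x := by
      filter_upwards [Ioi_mem_nhds hc] with t ht
      exact hhom t ht x
    rw [hev.deriv_eq]
    have := ((hasDerivAt_pow 2 c).mul_const (f x)).deriv
    rw [this]; ring
  have hddg : ∀ c ∈ Set.Ioi (0 : ℝ), deriv (deriv g) c = 2 * f x := by
    intro c hc
    have hev : deriv g =ᶠ[nhds c] fun t => 2 * t * f x := by
      filter_upwards [Ioi_mem_nhds hc] with t ht
      exact hdg t ht
    rw [hev.deriv_eq]
    have : HasDerivAt (fun t : ℝ => 2 * t * f x) (2 * 1 * f x) c :=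
      ((hasDerivAt_id c).const_mul 2).mul_const (f x)
    rw [this.deriv]; ring
  -- take the limit c → 0⁺
  have key : 2 * f x = F' (φ₁ 0) (φ₁ 0) + F 0 (φ₂ 0) := by
    have t1 : Filter.Tendsto (deriv (deriv g)) (nhdsWithin 0 (Set.Ioi 0))
        (nhds (deriv (deriv g) 0)) :=
      (hcont.tendsto 0).mono_left nhdsWithin_le_nhds
    have t2 : Filter.Tendsto (deriv (deriv g)) (nhdsWithin 0 (Set.Ioi 0))
        (nhds (2 * f x)) := by
      refine Filter.Tendsto.congr' ?_ tendsto_const_nhds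
      filter_upwards [self_mem_nhdsWithin] with c hc
      exact (hddg c hc).symm
    rw [← hdd0]
    exact tendsto_nhds_unique t2 t1
  -- expand the bilinear and linear parts
  have hB : F' (φ₁ 0) (φ₁ 0) =
      ∑ i ∈ Finset.univ.filter (fun i => w i = 1),
        ∑ j ∈ Finset.univ.filter (fun j => w j = 1),
          F' (Stmt4Aux.e i) (Stmt4Aux.e j) * x i * x j := by
    rw [Stmt4Aux.clm_expand2 F' (φ₁ 0) (φ₁ 0)]
    rw [← Finset.sum_filter_add_sum_filter_not Finset.univ (fun i => w i = 1)]
    have hz : ∑ i ∈ Finset.univ.filter (fun i => ¬ w i = 1),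
        (φ₁ 0) i * F' (Stmt4Aux.e i) (φ₁ 0) = 0 := by
      refine Finset.sum_eq_zero fun i hi => ?_
      rw [Finset.mem_filter] at hi
      rw [hu]; simp [hi.2]
    rw [hz, add_zero]
    refine Finset.sum_congr rfl fun i hi => ?_
    rw [Finset.mem_filter] at hi
    rw [Stmt4Aux.clm_expand (F' (Stmt4Aux.e i)) (φ₁ 0)]
    rw [← Finset.sum_filter_add_sum_filter_not Finset.univ (fun j => w j = 1)]
    have hz2 : ∑ j ∈ Finset.univ.filter (fun j => ¬ w j = 1),
        (φ₁ 0) j * F' (Stmt4Aux.e i) (Stmt4Aux.e j) = 0 := by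
      refine Finset.sum_eq_zero fun j hj => ?_
      rw [Finset.mem_filter] at hj
      rw [hu]; simp [hj.2]
    rw [hz2, add_zero, Finset.mul_sum]
    refine Finset.sum_congr rfl fun j hj => ?_
    rw [Finset.mem_filter] at hj
    rw [hu]; simp [hi.2, hj.2]; ring
  have hL : F 0 (φ₂ 0) =
      ∑ i ∈ Finset.univ.filter (fun i => w i = 2),
        2 * (F 0 (Stmt4Aux.e i) * x i) := by
    rw [Stmt4Aux.clm_expand (F 0) (φ₂ 0)]
    rw [← Finset.sum_filter_add_sum_filter_not Finset.univ (fun i => w i = 2)]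
    have hz : ∑ i ∈ Finset.univ.filter (fun i => ¬ w i = 2),
        (φ₂ 0) i * F 0 (Stmt4Aux.e i) = 0 := by
      refine Finset.sum_eq_zero fun i hi => ?_
      rw [Finset.mem_filter] at hi
      rw [hv]; simp [hi.2]
    rw [hz, add_zero]
    refine Finset.sum_congr rfl fun i hi => ?_
    rw [Finset.mem_filter] at hi
    rw [hv]; simp [hi.2]; ring
  -- conclude
  rw [hB, hL] at key
  have hgoal :
      (∑ i ∈ Finset.univ.filter (fun i => w i = 1),
        ∑ j ∈ Finset.univ.filter (fun j => w j = 1),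
          (F' (Stmt4Aux.e i) (Stmt4Aux.e j) / 2) * x i * x j)
      + ∑ i ∈ Finset.univ.filter (fun i => w i = 2), F 0 (Stmt4Aux.e i) * x i
      = ((∑ i ∈ Finset.univ.filter (fun i => w i = 1),
        ∑ j ∈ Finset.univ.filter (fun j => w j = 1),
          F' (Stmt4Aux.e i) (Stmt4Aux.e j) * x i * x j)
      + ∑ i ∈ Finset.univ.filter (fun i => w i = 2),
          2 * (F 0 (Stmt4Aux.e i) * x i)) / 2 := by
    rw [add_div, Finset.sum_div, Finset.sum_div]
    congr 1
    · refine Finset.sum_congr rfl fun i _ => ?_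
      rw [Finset.sum_div]
      exact Finset.sum_congr rfl fun j _ => by ring
    · exact Finset.sum_congr rfl fun i _ => by ring
  rw [hgoal, ← key]
  ring
end

section
/- Let m be a positive natural number, let w : Fin m → ℕ be a weight function with w(i) ≥ 1 for every i, let d be a natural number, and let f : (Fin m → ℝ) → ℝ be a smooth function satisfying f(fun i => c^(w i) · x i) = c^d · f(x) for every real number c > 0 and every x : Fin m → ℝ. Then there exists a multivariate polynomial P in m variables with real coefficients such that f(x) = P(x) for all x, and every monomial x^α occurring in P with nonzero coefficient satisfies Σ_i w(i) · α(i) = d. -/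
open MvPolynomial Filter Topology

lemma aux_tendsto (m : ℕ) (w : Fin m → ℕ) (hw : ∀ i, 1 ≤ w i) (x : Fin m → ℝ) :
    Tendsto (fun c : ℝ => (fun i => c ^ (w i) * x i)) (𝓝[>] (0:ℝ)) (𝓝 0) := by
  rw [tendsto_pi_nhds]
  intro i
  have h : Tendsto (fun c : ℝ => c ^ (w i) * x i) (𝓝 (0:ℝ)) (𝓝 ((0:ℝ) ^ (w i) * x i)) :=
    ((continuous_pow (w i)).mul continuous_const).tendsto 0
  have h0 : (0:ℝ) ^ (w i) * x i = 0 := by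
    rw [zero_pow (by have := hw i; omega), zero_mul]
  rw [h0] at h
  exact (h.mono_left nhdsWithin_le_nhds).congr (fun c => rfl) |>.congr (fun c => rfl)

lemma aux_main (m : ℕ) (w : Fin m → ℕ) (hw : ∀ i, 1 ≤ w i) :
    ∀ d : ℕ, ∀ f : (Fin m → ℝ) → ℝ, ContDiff ℝ (⊤ : ℕ∞) f →
    (∀ c : ℝ, 0 < c → ∀ x : Fin m → ℝ,
      f (fun i => c ^ (w i) * x i) = c ^ d * f x) →
    ∃ P : MvPolynomial (Fin m) ℝ,
      (∀ x : Fin m → ℝ, f x = MvPolynomial.eval x P) ∧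
      ∀ α ∈ P.support, ∑ i : Fin m, w i * α i = d := by
  intro d
  induction d using Nat.strong_induction_on with
  | _ d IH =>
  intro f hf hhom
  rcases Nat.eq_zero_or_pos d with hd0 | hdpos
  · -- base case: f is constant
    subst hd0
    have hconst : ∀ x : Fin m → ℝ, f x = f 0 := by
      intro x
      have T := aux_tendsto m w hw x
      have h1 : Tendsto (fun c : ℝ => f (fun i => c ^ (w i) * x i)) (𝓝[>] (0:ℝ)) (𝓝 (f 0)) :=
        (hf.continuous.tendsto 0).comp T
      have h2 : (fun c : ℝ => f (fun i => c ^ (w i) * x i)) =ᶠ[𝓝[>] (0:ℝ)]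
          (fun _ => f x) := by
        filter_upwards [self_mem_nhdsWithin] with c hc
        rw [hhom c hc x, pow_zero, one_mul]
      have h3 : Tendsto (fun _ : ℝ => f x) (𝓝[>] (0:ℝ)) (𝓝 (f 0)) :=
        h1.congr' h2
      exact (tendsto_nhds_unique h3 tendsto_const_nhds).symm
    refine ⟨MvPolynomial.C (f 0), fun x => by rw [hconst x, eval_C], ?_⟩
    intro α hα
    rw [mem_support_iff, coeff_C] at hα
    by_cases h : (0 : Fin m →₀ ℕ) = α
    · simp [← h]
    · simp [h] at hα
  · -- inductive step
    set g : Fin m → ((Fin m → ℝ) → ℝ) := fun i x => fderiv ℝ f x (Pi.single i 1) with hgdef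
    have hg : ∀ i, ContDiff ℝ (⊤ : ℕ∞) (g i) := fun i =>
      (hf.fderiv_right (by simp)).clm_apply contDiff_const
    have hdiff : Differentiable ℝ f := hf.differentiable (by simp)
    -- homogeneity of the partial derivatives
    have hgh : ∀ i, ∀ c : ℝ, 0 < c → ∀ x : Fin m → ℝ,
        c ^ (w i) * g i (fun j => c ^ (w j) * x j) = c ^ d * g i x := by
      intro i c hc x
      set L : (Fin m → ℝ) →L[ℝ] (Fin m → ℝ) :=
        ContinuousLinearMap.pi (fun j => (c ^ (w j) : ℝ) •
          (ContinuousLinearMap.proj (R := ℝ) (φ := fun _ : Fin m => ℝ) j)) with hLdef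
      have hLapp : ∀ y : Fin m → ℝ, L y = fun j => c ^ (w j) * y j := fun y => rfl
      have hcomp : (fun y => f (L y)) = (fun y => c ^ d * f y) := by
        funext y
        rw [hLapp y]
        exact hhom c hc y
      have h1 : HasFDerivAt (fun y => f (L y)) ((fderiv ℝ f (L x)).comp L) x :=
        (hdiff (L x)).hasFDerivAt.comp x L.hasFDerivAt
      have h2 : HasFDerivAt (fun y => c ^ d * f y) ((c ^ d : ℝ) • fderiv ℝ f x) x :=
        (hdiff x).hasFDerivAt.const_mul (c ^ d)
      rw [hcomp] at h1
      have heq := h1.unique h2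
      have happ := congrArg (fun (T : (Fin m → ℝ) →L[ℝ] ℝ) => T (Pi.single i 1)) heq
      simp only [ContinuousLinearMap.comp_apply, ContinuousLinearMap.smul_apply,
        smul_eq_mul] at happ
      have hLsingle : L (Pi.single i 1) = (c ^ (w i) : ℝ) • (Pi.single i 1 : Fin m → ℝ) := by
        rw [hLapp]
        funext j
        by_cases h : j = i
        · subst h; simp
        · simp [Pi.single_apply, h]
      rw [hLsingle, (fderiv ℝ f (L x)).map_smul, smul_eq_mul] at happ
      rw [hLapp x] at happ
      exact happ
    -- Euler's relation
    have euler : ∀ x : Fin m → ℝ, (d : ℝ) * f x = ∑ i, (w i : ℝ) * x i * g i x := by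
      intro x
      have hgamma : HasDerivAt (fun c : ℝ => (fun j => c ^ (w j) * x j))
          (fun j => (w j : ℝ) * x j) 1 := by
        rw [hasDerivAt_pi]
        intro j
        have h := (hasDerivAt_pow (w j) (1:ℝ)).mul_const (x j)
        simpa using h
      have hfd : HasFDerivAt f (fderiv ℝ f x)
          ((fun c : ℝ => (fun j => c ^ (w j) * x j)) 1) := by
        rw [show ((fun c : ℝ => (fun j => c ^ (w j) * x j)) 1) = x from by funext j; simp]
        exact (hdiff x).hasFDerivAt
      have hcomp := hfd.comp_hasDerivAt 1 hgamma
      have hev : (fun c : ℝ => f (fun j => c ^ (w j) * x j)) =ᶠ[𝓝 (1:ℝ)]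
          (fun c => c ^ d * f x) := by
        filter_upwards [eventually_gt_nhds (zero_lt_one)] with c hc
        exact hhom c hc x
      have h2 : HasDerivAt (fun c : ℝ => c ^ d * f x)
          (fderiv ℝ f x (fun j => (w j : ℝ) * x j)) 1 :=
        hcomp.congr_of_eventuallyEq hev.symm
      have h3 : HasDerivAt (fun c : ℝ => c ^ d * f x) ((d : ℝ) * f x) 1 := by
        simpa using (hasDerivAt_pow d (1:ℝ)).mul_const (f x)
      have h4 := h2.unique h3
      rw [← h4]
      have hv : (fun j => (w j : ℝ) * x j)
          = ∑ i : Fin m, ((w i : ℝ) * x i) • (Pi.single i 1 : Fin m → ℝ) := by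
        funext j
        rw [Finset.sum_apply]
        simp [Pi.single_apply]
      rw [hv, map_sum]
      refine Finset.sum_congr rfl (fun i _ => ?_)
      rw [(fderiv ℝ f x).map_smul, smul_eq_mul, mul_assoc]
    -- each partial derivative is a polynomial
    have hPi : ∀ i, ∃ Q : MvPolynomial (Fin m) ℝ,
        (∀ x : Fin m → ℝ, g i x = MvPolynomial.eval x Q) ∧
        ∀ α ∈ Q.support, w i + ∑ j : Fin m, w j * α j = d := by
      intro i
      rcases le_or_gt (w i) d with hle | hlt
      · have hhom' : ∀ c : ℝ, 0 < c → ∀ x : Fin m → ℝ,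
            g i (fun j => c ^ (w j) * x j) = c ^ (d - w i) * g i x := by
          intro c hc x
          have h := hgh i c hc x
          have hc' : (c : ℝ) ^ (w i) ≠ 0 := pow_ne_zero _ (ne_of_gt hc)
          have hd' : c ^ d = c ^ (w i) * c ^ (d - w i) := by
            rw [← pow_add, Nat.add_sub_cancel' hle]
          rw [hd', mul_assoc] at h
          exact mul_left_cancel₀ hc' h
        obtain ⟨Q, hQ1, hQ2⟩ := IH (d - w i) (by have := hw i; omega) (g i) (hg i) hhom'
        exact ⟨Q, hQ1, fun α hα => by have := hQ2 α hα; omega⟩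
      · refine ⟨0, fun x => ?_, by simp⟩
        have T := aux_tendsto m w hw x
        have h1 : Tendsto (fun c : ℝ => c ^ (w i - d) * g i (fun j => c ^ (w j) * x j))
            (𝓝[>] (0:ℝ)) (𝓝 ((0:ℝ) ^ (w i - d) * g i 0)) := by
          refine Tendsto.mul ?_ ?_
          · exact ((continuous_pow (w i - d)).tendsto 0).mono_left nhdsWithin_le_nhds
          · exact ((hg i).continuous.tendsto 0).comp T
        rw [zero_pow (by omega : w i - d ≠ 0), zero_mul] at h1
        have h2 : (fun c : ℝ => c ^ (w i - d) * g i (fun j => c ^ (w j) * x j))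
            =ᶠ[𝓝[>] (0:ℝ)] (fun _ => g i x) := by
          filter_upwards [self_mem_nhdsWithin] with c hc
          have h := hgh i c hc x
          have hcc : c ^ (w i) = c ^ d * c ^ (w i - d) := by
            rw [← pow_add, Nat.add_sub_cancel' hlt.le]
          rw [hcc, mul_assoc] at h
          have hcd : (c:ℝ) ^ d ≠ 0 := pow_ne_zero _ (ne_of_gt hc)
          exact mul_left_cancel₀ hcd h
        have h3 := tendsto_nhds_unique (h1.congr' h2) tendsto_const_nhds
        simp [← h3]
    choose Q hQe hQs using hPi
    refine ⟨((d : ℝ))⁻¹ • ∑ i, (w i : ℝ) • (MvPolynomial.X i * Q i), ?_, ?_⟩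
    · intro x
      have hdne : (d : ℝ) ≠ 0 := Nat.cast_ne_zero.mpr (by omega)
      rw [smul_eval, map_sum]
      have : ∀ i, MvPolynomial.eval x ((w i : ℝ) • (MvPolynomial.X i * Q i))
          = (w i : ℝ) * x i * g i x := by
        intro i
        rw [smul_eval, eval_mul, eval_X, hQe i x, mul_assoc]
      rw [Finset.sum_congr rfl (fun i _ => this i), ← euler x]
      field_simp
    · intro α hα
      have h1 := MvPolynomial.support_smul hα
      obtain ⟨i, hi, h2⟩ := Finset.mem_biUnion.mp (MvPolynomial.support_sum h1)
      have h3 := MvPolynomial.support_smul h2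
      rw [MvPolynomial.support_X_mul, Finset.mem_map] at h3
      obtain ⟨β, hβ, hβα⟩ := h3
      rw [addLeftEmbedding_apply] at hβα
      subst hβα
      have hsum := hQs i β hβ
      simp only [Finsupp.add_apply, mul_add, Finset.sum_add_distrib]
      have hsingle : ∑ j : Fin m, w j * (Finsupp.single i 1 : Fin m →₀ ℕ) j = w i := by
        simp [Finsupp.single_apply]
      rw [hsingle]
      omega

/-- Homogeneous function theorem (Kolář–Michor–Slovák): a smooth function that is
weighted positively homogeneous of degree `d` with positive integer weights `w`
is a polynomial all of whose monomials have weighted degree exactly `d`. -/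
theorem stmt_5 (m : ℕ) (hm : 0 < m) (w : Fin m → ℕ) (hw : ∀ i, 1 ≤ w i) (d : ℕ)
    (f : (Fin m → ℝ) → ℝ) (hf : ContDiff ℝ (⊤ : ℕ∞) f)
    (hhom : ∀ c : ℝ, 0 < c → ∀ x : Fin m → ℝ,
      f (fun i => c ^ (w i) * x i) = c ^ d * f x) :
    ∃ P : MvPolynomial (Fin m) ℝ,
      (∀ x : Fin m → ℝ, f x = MvPolynomial.eval x P) ∧
      ∀ α ∈ P.support, ∑ i : Fin m, w i * α i = d :=
  aux_main m w hw d f hf hhom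
end
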